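/- There is no Lie algebra automorphism φ of h₁ such that {φ ∘ d ∘ φ⁻¹ : d ∈ t₁} = t₂; that is, the tori t₁ and t₂ of h₁ are not conjugate under Aut(h₁). -/

import Mathlib

open Module

/-- Two subspaces of endomorphisms are conjugate under a Lie algebra automorphism `φ` when
`{φ ∘ d ∘ φ⁻¹ : d ∈ t} = t'`. -/
def ConjTorus {g : Type*} [LieRing g] [LieAlgebra ℝ g]
    (t t' : Submodule ℝ (Module.End ℝ g)) : Prop :=
  ∃ φ : g ≃ₗ⁅ℝ⁆ g,
    (fun d : Module.End ℝ g =>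
        (φ.toLinearEquiv.toLinearMap) ∘ₗ d ∘ₗ (φ.symm.toLinearEquiv.toLinearMap)) ''
      (t : Set (Module.End ℝ g)) = (t' : Set (Module.End ℝ g))

lemma trace_formula {g : Type} [AddCommGroup g] [Module ℝ g] (b : Basis (Fin 3) ℝ g)
    (f : g →ₗ[ℝ] g) :
    LinearMap.trace ℝ g f = b.repr (f (b 0)) 0 + b.repr (f (b 1)) 1 + b.repr (f (b 2)) 2 := by
  rw [LinearMap.trace_eq_matrix_trace ℝ b, Matrix.trace]
  simp [Fin.sum_univ_three, LinearMap.toMatrix_apply, Matrix.diag]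

theorem t1_t2_not_conjugate {g : Type} [LieRing g] [LieAlgebra ℝ g] (b : Basis (Fin 3) ℝ g)
    (h12 : ⁅b 0, b 1⁆ = b 2) (h13 : ⁅b 0, b 2⁆ = 0) (h23 : ⁅b 1, b 2⁆ = 0) :
    ¬ ConjTorus
        (Submodule.span ℝ {b.constr ℝ ![b 0, 0, b 2], b.constr ℝ ![0, b 1, b 2]})
        (Submodule.span ℝ
          {b.constr ℝ ![b 0, b 1, (2 : ℝ) • b 2], b.constr ℝ ![b 1, -b 0, 0]}) := by
  rintro ⟨φ, hφ⟩
  set D1 : Module.End ℝ g := b.constr ℝ ![b 0, 0, b 2] with hD1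
  set E1 : Module.End ℝ g := b.constr ℝ ![b 0, b 1, (2 : ℝ) • b 2] with hE1
  set E2 : Module.End ℝ g := b.constr ℝ ![b 1, -b 0, 0] with hE2
  set C : Module.End ℝ g :=
    (φ.toLinearEquiv.toLinearMap) ∘ₗ D1 ∘ₗ (φ.symm.toLinearEquiv.toLinearMap) with hC
  have hmem : C ∈ (Submodule.span ℝ ({E1, E2} : Set (Module.End ℝ g)) :
      Set (Module.End ℝ g)) := by
    rw [← hφ]
    exact ⟨D1, Submodule.subset_span (Set.mem_insert _ _), rfl⟩
  obtain ⟨a, c, hac⟩ := Submodule.mem_span_pair.mp hmem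
  -- trace invariance
  have htrC : LinearMap.trace ℝ g C = LinearMap.trace ℝ g D1 := by
    have := LinearMap.trace_conj' D1 φ.toLinearEquiv
    simpa [LinearEquiv.conj_apply, LinearMap.comp_assoc, hC,
      (show φ.symm.toLinearEquiv = φ.toLinearEquiv.symm from rfl)] using this
  have hCsq : C ∘ₗ C = (φ.toLinearEquiv.toLinearMap) ∘ₗ (D1 ∘ₗ D1) ∘ₗ
      (φ.symm.toLinearEquiv.toLinearMap) := by
    ext x
    simp [hC, LinearMap.comp_apply]
  have htrC2 : LinearMap.trace ℝ g (C ∘ₗ C) = LinearMap.trace ℝ g (D1 ∘ₗ D1) := by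
    rw [hCsq]
    have := LinearMap.trace_conj' (D1 ∘ₗ D1) φ.toLinearEquiv
    simpa [LinearEquiv.conj_apply, LinearMap.comp_assoc,
      (show φ.symm.toLinearEquiv = φ.toLinearEquiv.symm from rfl)] using this
  -- compute traces
  have e1 : (4 : ℝ) * a = 2 := by
    have hL : LinearMap.trace ℝ g (a • E1 + c • E2) = LinearMap.trace ℝ g D1 := by
      rw [hac, htrC]
    have h1 := (trace_formula b (a • E1 + c • E2)).symm.trans
      (hL.trans (trace_formula b D1))
    simp [hD1, hE1, hE2, Basis.constr_basis, map_add, map_smul, map_neg] at h1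
    linarith
  have e2 : (6 : ℝ) * a ^ 2 - 2 * c ^ 2 = 2 := by
    have hL : LinearMap.trace ℝ g ((a • E1 + c • E2) ∘ₗ (a • E1 + c • E2)) =
        LinearMap.trace ℝ g (D1 ∘ₗ D1) := by
      rw [hac, htrC2]
    have h1 := (trace_formula b ((a • E1 + c • E2) ∘ₗ (a • E1 + c • E2))).symm.trans
      (hL.trans (trace_formula b (D1 ∘ₗ D1)))
    simp [hD1, hE1, hE2, Basis.constr_basis, map_add, map_smul, map_neg,
      LinearMap.comp_apply, smul_add, smul_smul] at h1
    nlinarith [h1]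
  nlinarith [sq_nonneg c, e1, e2]
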